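/- Let P_X and P_Y be probability measures on a measurable space (E, ℰ) and g : E → ℝ a measurable function such that g(Z) has a continuous (atomless) distribution with cumulative distribution function F_X when Z ~ P_X and F_Y when Z ~ P_Y. Set μ* := P( g(Z_X) < g(Z_Y) ) for independent Z_X ~ P_X, Z_Y ~ P_Y. Define the kernels h⁰(z, z') := 1{ g(z) < g(z') } − F_X(g(z')) + F_X(g(z)) − 1/2 and h†(z, z') := 1{ g(z) < g(z') } − F_X(g(z')) + F_Y(g(z)) − 1 + μ*. Let Z_i, Z_j be independent with law P_X and Z_{j'} with law P_Y, all three mutually independent. Then E[ h⁰(Z_i, Z_j) · h†(Z_i, Z_{j'}) ] = 0. -/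

import Mathlib

/-!
Integrate out `Z_j` first. For fixed `z`, `P(g z < g Z) = 1 - F_X(g z)` and, because the law of
`g Z` is atomless, `E[F_X(g Z)] = 1/2` for `Z ~ P_X`; hence `∫ h⁰(z, ·) dP_X = 0` for every `z`.
Since `Z_j` is independent of `(Z_i, Z_{j'})` and both kernels are bounded, Fubini turns the
expectation into `E[h†(Z_i, Z_{j'}) · ∫ h⁰(Z_i, ·) dP_X] = 0`.
-/

open MeasureTheory ProbabilityTheory Set

lemma MeasureTheory.Measure.prod_diagonal_eq_zero {α : Type*} [MeasurableSpace α] [MeasurableEq α]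
    (μ ν : Measure α) [SFinite ν] [NullSingletonClass ν] : μ.prod ν (diagonal α) = 0 := by
  rw [Measure.prod_apply measurableSet_diagonal]
  simp [diagonal, preimage]

section cdf

variable {ν : Measure ℝ} [IsProbabilityMeasure ν]

lemma integral_ite_lt_eq_one_sub_cdf (a : ℝ) :
    ∫ t, (if a < t then (1 : ℝ) else 0) ∂ν = 1 - cdf ν a := by
  have hind : (fun t => if a < t then (1 : ℝ) else 0) = (Ioi a).indicator 1 := by
    ext t; simp [indicator_apply]
  rw [hind, integral_indicator_one measurableSet_Ioi, cdf_eq_real, ← compl_Iic,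
    probReal_compl_eq_one_sub measurableSet_Iic]

/-- For an atomless law, `∫ F dν = P(Y ≤ X) = 1/2` for independent `X, Y ~ ν`: by symmetry the
events `Y ≤ X` and `X ≤ Y` are equally likely, they cover everything and overlap only on the
null diagonal. -/
lemma integral_cdf_self [NullSingletonClass ν] : ∫ t, cdf ν t ∂ν = 1 / 2 := by
  have hle : MeasurableSet {p : ℝ × ℝ | p.2 ≤ p.1} := measurableSet_le measurable_snd measurable_fst
  have hint : ∫ t, cdf ν t ∂ν = (ν.prod ν).real {p | p.2 ≤ p.1} := by
    rw [← integral_indicator_one hle, integral_prod _ ((integrable_const 1).indicator hle)]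
    congr 1 with t
    rw [cdf_eq_real, ← integral_indicator_one measurableSet_Iic]
    rfl
  have hswap : (ν.prod ν).real {p | p.1 ≤ p.2} = (ν.prod ν).real {p | p.2 ≤ p.1} := by
    conv_lhs => rw [← Measure.prod_swap]
    rw [map_measureReal_apply measurable_swap (measurableSet_le measurable_fst measurable_snd)]
    rfl
  have hunion : {p : ℝ × ℝ | p.2 ≤ p.1} ∪ {p | p.1 ≤ p.2} = univ := by
    ext p; simp [le_total]
  have hinter : {p : ℝ × ℝ | p.2 ≤ p.1} ∩ {p | p.1 ≤ p.2} = diagonal ℝ := by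
    ext p; simp [le_antisymm_iff, and_comm]
  have := measureReal_union_add_inter (μ := ν.prod ν) (s := {p : ℝ × ℝ | p.2 ≤ p.1})
    (measurableSet_le measurable_fst measurable_snd)
  rw [hunion, hinter, probReal_univ, measureReal_def, Measure.prod_diagonal_eq_zero,
    ENNReal.toReal_zero, hswap] at this
  linarith

lemma integral_ite_lt_sub_cdf_add_cdf_sub_half [NullSingletonClass ν] (a : ℝ) :
    ∫ t, ((if a < t then (1 : ℝ) else 0) - cdf ν t + cdf ν a - 1 / 2) ∂ν = 0 := by
  have hind : Integrable (fun t => if a < t then (1 : ℝ) else 0) ν :=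
    (integrable_const 1).indicator measurableSet_Ioi
  have hcdf : Integrable (cdf ν) ν :=
    Integrable.of_bound (monotone_cdf ν).measurable.aestronglyMeasurable 1
      (Filter.Eventually.of_forall fun t => by
        rw [Real.norm_of_nonneg (cdf_nonneg ν t)]; exact cdf_le_one ν t)
  have hdiff : Integrable (fun t => (if a < t then (1 : ℝ) else 0) - cdf ν t) ν := hind.sub hcdf
  have hsplit : ∀ t, (if a < t then (1 : ℝ) else 0) - cdf ν t + cdf ν a - 1 / 2
      = ((if a < t then (1 : ℝ) else 0) - cdf ν t) + (cdf ν a - 1 / 2) := fun t => by ring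
  simp_rw [hsplit]
  rw [integral_add hdiff (integrable_const _), integral_sub hind hcdf,
    integral_ite_lt_eq_one_sub_cdf, integral_cdf_self, integral_const, probReal_univ, one_smul]
  ring

end cdf

lemma cdf_map_apply {E : Type*} [MeasurableSpace E] (P : Measure E) [IsProbabilityMeasure P]
    {g : E → ℝ} (hg : Measurable g) (t : ℝ) :
    cdf (P.map g) t = (P {z | g z ≤ t}).toReal := by
  have := Measure.isProbabilityMeasure_map (μ := P) hg.aemeasurable
  rw [cdf_eq_real, map_measureReal_apply hg measurableSet_Iic]
  rfl

lemma integral_comp_eq_zero_of_indepFun {Ω α β F : Type*} [MeasurableSpace Ω]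
    [MeasurableSpace α] [MeasurableSpace β] [NormedAddCommGroup F] [NormedSpace ℝ F]
    {μ : Measure Ω} [IsFiniteMeasure μ] {X : Ω → α} {Y : Ω → β}
    (hX : AEMeasurable X μ) (hY : AEMeasurable Y μ) (hXY : IndepFun X Y μ)
    {φ : α × β → F} (hφ : Integrable φ ((μ.map X).prod (μ.map Y)))
    (hφ_zero : ∀ᵐ x ∂μ.map X, ∫ y, φ (x, y) ∂μ.map Y = 0) :
    ∫ ω, φ (X ω, Y ω) ∂μ = 0 := by
  have hlaw : μ.map (fun ω => (X ω, Y ω)) = (μ.map X).prod (μ.map Y) :=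
    (indepFun_iff_map_prod_eq_prod_map_map hX hY).mp hXY
  rw [← integral_map (hX.prodMk hY) (hlaw ▸ hφ.aestronglyMeasurable), hlaw,
    integral_prod φ hφ, integral_congr_ae hφ_zero, integral_zero]

lemma integral_mul_eq_zero_of_iIndepFun {Ω E : Type*} [MeasurableSpace Ω] [MeasurableSpace E]
    {μ : Measure Ω} [IsProbabilityMeasure μ] {Z₁ Z₂ Z₃ : Ω → E}
    (h₁ : Measurable Z₁) (h₂ : Measurable Z₂) (h₃ : Measurable Z₃)
    (hindep : iIndepFun ![Z₁, Z₂, Z₃] μ) {f k : E → E → ℝ}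
    (hf : Measurable (Function.uncurry f)) (hk : Measurable (Function.uncurry k)) {C D : ℝ}
    (hfC : ∀ a b, |f a b| ≤ C) (hkD : ∀ a b, |k a b| ≤ D)
    (hf_zero : ∀ a, ∫ b, f a b ∂μ.map Z₂ = 0) :
    ∫ ω, f (Z₁ ω) (Z₂ ω) * k (Z₁ ω) (Z₃ ω) ∂μ = 0 := by
  have hpair : IndepFun (fun ω => (Z₁ ω, Z₃ ω)) Z₂ μ := by
    have hmeas : ∀ i, Measurable (![Z₁, Z₂, Z₃] i) := by
      intro i; fin_cases i <;> assumption
    simpa using hindep.indepFun_prodMk hmeas 0 2 1 (by decide) (by decide)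
  have hφ : Measurable fun p : (E × E) × E => f p.1.1 p.2 * k p.1.1 p.1.2 :=
    (hf.comp (measurable_fst.fst.prodMk measurable_snd)).mul (hk.comp measurable_fst)
  refine integral_comp_eq_zero_of_indepFun (φ := fun p => f p.1.1 p.2 * k p.1.1 p.1.2)
    (h₁.prodMk h₃).aemeasurable h₂.aemeasurable hpair
    (Integrable.of_bound hφ.aestronglyMeasurable (C * D) (Filter.Eventually.of_forall fun p => ?_))
    (Filter.Eventually.of_forall fun x => ?_)
  · rw [Real.norm_eq_abs, abs_mul]
    exact mul_le_mul (hfC _ _) (hkD _ _) (abs_nonneg _) ((abs_nonneg _).trans (hfC p.1.1 p.2))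
  · change ∫ y, f x.1 y * k x.1 x.2 ∂_ = 0
    rw [integral_mul_const, hf_zero, zero_mul]

theorem statement11_general {E Ω : Type*} [MeasurableSpace E] [MeasureSpace Ω]
    [IsProbabilityMeasure (ℙ : Measure Ω)]
    (PX PY : Measure E) [IsProbabilityMeasure PX] [IsProbabilityMeasure PY]
    (g : E → ℝ) (hg : Measurable g)
    (hatomlessX : ∀ c : ℝ, PX {z | g z = c} = 0)
    (FX FY : ℝ → ℝ)
    (hFX : FX = fun t => (PX {z | g z ≤ t}).toReal)
    (hFY : FY = fun t => (PY {z | g z ≤ t}).toReal)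
    (μs : ℝ) (hμs : μs = ((PX.prod PY) {p | g p.1 < g p.2}).toReal)
    (h0 : E → E → ℝ)
    (hh0 : h0 = fun z z' =>
      (if g z < g z' then (1 : ℝ) else 0) - FX (g z') + FX (g z) - 1 / 2)
    (hdag : E → E → ℝ)
    (hhdag : hdag = fun z z' =>
      (if g z < g z' then (1 : ℝ) else 0) - FX (g z') + FY (g z) - 1 + μs)
    (Zi Zj Zj' : Ω → E)
    (hZi : Measurable Zi) (hZj : Measurable Zj) (hZj' : Measurable Zj')
    (hindep : iIndepFun (m := fun _ => ‹MeasurableSpace E›) ![Zi, Zj, Zj'] ℙ)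
    (hlawZj : Measure.map Zj ℙ = PX) :
    (∫ ω, h0 (Zi ω) (Zj ω) * hdag (Zi ω) (Zj' ω)) = 0 := by
  have := Measure.isProbabilityMeasure_map (μ := PX) hg.aemeasurable
  have : NullSingletonClass (PX.map g) :=
    ⟨fun c => by rw [Measure.map_apply hg (measurableSet_singleton c)]; exact hatomlessX c⟩
  have hFX' : FX = cdf (PX.map g) := funext fun t => by rw [hFX, cdf_map_apply PX hg]
  have hFY' : FY = cdf (PY.map g) := funext fun t => by rw [hFY, cdf_map_apply PY hg]
  have hμs : 0 ≤ μs ∧ μs ≤ 1 := hμs ▸ ⟨ENNReal.toReal_nonneg, measureReal_le_one⟩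
  have hlt : Measurable fun p : E × E => if g p.1 < g p.2 then (1 : ℝ) else 0 :=
    Measurable.ite (measurableSet_lt (hg.comp measurable_fst) (hg.comp measurable_snd))
      measurable_const measurable_const
  have hFXm : Measurable FX := hFX' ▸ (monotone_cdf _).measurable
  have hFYm : Measurable FY := hFY' ▸ (monotone_cdf _).measurable
  have hF : ∀ t, 0 ≤ FX t ∧ FX t ≤ 1 ∧ 0 ≤ FY t ∧ FY t ≤ 1 := fun t =>
    hFX' ▸ hFY' ▸ ⟨cdf_nonneg _ t, cdf_le_one _ t, cdf_nonneg _ t, cdf_le_one _ t⟩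
  refine integral_mul_eq_zero_of_iIndepFun hZi hZj hZj' hindep (C := 2) (D := 2)
    (by subst hh0; fun_prop) (by subst hhdag; fun_prop) (fun a b => ?_) (fun a b => ?_)
    (fun a => ?_)
  · have := hF (g a); have := hF (g b)
    simp only [hh0, abs_le]
    split_ifs <;> constructor <;> linarith
  · have := hF (g a); have := hF (g b)
    simp only [hhdag, abs_le]
    split_ifs <;> constructor <;> linarith
  · have : Measurable fun t => if g a < t then (1 : ℝ) else 0 :=
      Measurable.ite measurableSet_Ioi measurable_const measurable_const
    rw [hlawZj, ← integral_ite_lt_sub_cdf_add_cdf_sub_half (ν := PX.map g) (g a),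
      integral_map hg.aemeasurable (by rw [← hFX']; fun_prop), hh0, hFX']

/-- with `g(Z)` atomless under `P_X` (CDF `F_X`) and under `P_Y`
(CDF `F_Y`), `μ* := P(g(Z_X) < g(Z_Y))`, and kernels
`h⁰(z,z') := 1{g z < g z'} − F_X(g z') + F_X(g z) − 1/2` and
`h†(z,z') := 1{g z < g z'} − F_X(g z') + F_Y(g z) − 1 + μ*`: for mutually
independent `Z_i, Z_j ~ P_X` and `Z_{j'} ~ P_Y`,
`E[h⁰(Z_i, Z_j)·h†(Z_i, Z_{j'})] = 0`. -/
theorem statement11 {E Ω : Type*} [MeasurableSpace E] [MeasureSpace Ω]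
    [IsProbabilityMeasure (ℙ : Measure Ω)]
    (PX PY : Measure E) [IsProbabilityMeasure PX] [IsProbabilityMeasure PY]
    (g : E → ℝ) (hg : Measurable g)
    (hatomlessX : ∀ c : ℝ, PX {z | g z = c} = 0)
    (hatomlessY : ∀ c : ℝ, PY {z | g z = c} = 0)
    (FX FY : ℝ → ℝ)
    (hFX : FX = fun t => (PX {z | g z ≤ t}).toReal)
    (hFY : FY = fun t => (PY {z | g z ≤ t}).toReal)
    (μs : ℝ) (hμs : μs = ((PX.prod PY) {p | g p.1 < g p.2}).toReal)
    (h0 : E → E → ℝ)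
    (hh0 : h0 = fun z z' =>
      (if g z < g z' then (1 : ℝ) else 0) - FX (g z') + FX (g z) - 1 / 2)
    (hdag : E → E → ℝ)
    (hhdag : hdag = fun z z' =>
      (if g z < g z' then (1 : ℝ) else 0) - FX (g z') + FY (g z) - 1 + μs)
    (Zi Zj Zj' : Ω → E)
    (hZi : Measurable Zi) (hZj : Measurable Zj) (hZj' : Measurable Zj')
    (hindep : iIndepFun (m := fun _ => ‹MeasurableSpace E›) ![Zi, Zj, Zj'] ℙ)
    (hlawZi : Measure.map Zi ℙ = PX) (hlawZj : Measure.map Zj ℙ = PX)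
    (hlawZj' : Measure.map Zj' ℙ = PY) :
    (∫ ω, h0 (Zi ω) (Zj ω) * hdag (Zi ω) (Zj' ω)) = 0 :=
  statement11_general PX PY g hg hatomlessX FX FY hFX hFY μs hμs h0 hh0 hdag hhdag Zi Zj Zj' hZi hZj
    hZj' hindep hlawZj
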